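/- arXiv:1906.07600 — 5 statements merged into one kernel-verified Lean document; each statement's English description precedes it below -/
import Mathlib

section
/- Let f, g : 2^ω → ℝ be Baire 1 functions. If |f|_α < |g|_α, then f ≤_m g. -/
/-!
For a Baire 1 function and a nonempty closed set `P`, the Baire category theorem on `P` yields an
open `U` meeting `P` on which one answer to `f ≲_ε p` is correct throughout `P ∩ U`; hence the
derivatives `P^ν_{f,p,ε}` strictly decrease while nonempty and reach `∅`.

Given `p, ε`, pick `q, δ` with `α(f,p,ε) < α(g,q,δ)`. Each `A` lies in `P^ρ_f \ P^{ρ+1}_f` for some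
`ρ`, so the cylinders around `A` eventually have rank `ρ` (the least `ν` with `c ∩ P^{ν+1}_f = ∅`)
and a fixed answer `b` correct on their top layer `c ∩ P^ρ_f`. The reduction reads `A` bit by bit
and keeps a target point `B ∈ P^e_g` with `e` at least the current cylinder rank. When the rank
drops or the recorded side stops being correct, it jumps to a point of `P^m_g` (`m` the new rank)
sharing the first `n` bits of `B` on which only the required answer is correct for `g`; it exists
because `B ∈ P^{m+1}_g`. Each output bit is thus fixed after finitely many input bits, which gives
continuity, and once the rank has stabilised the target stops moving.
-/

/-- Cantor space `2^ω`. -/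
abbrev Cantor : Type := ℕ → Bool

/-- A bit `b` is a correct answer to the question `f A ≲_ε p`. -/
def CorrectAnswer (f : Cantor → ℝ) (A : Cantor) (p ε : ℚ) (b : Bool) : Prop :=
  (b = true ∧ f A < (p : ℝ) + (ε : ℝ)) ∨ (b = false ∧ (p : ℝ) - (ε : ℝ) < f A)

/-- Topological m-reducibility `f ≤_m g`. -/
def MReducible (f g : Cantor → ℝ) : Prop :=
  ∀ p ε : ℚ, 0 < ε → ∃ q δ : ℚ, 0 < δ ∧ ∃ k : Cantor → Cantor, Continuous k ∧
    ∀ A b, CorrectAnswer g (k A) q δ b → CorrectAnswer f A p ε b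

/-- `f` is Baire class 1: a pointwise limit of continuous functions. -/
def BaireOne (f : Cantor → ℝ) : Prop :=
  ∃ F : ℕ → Cantor → ℝ, (∀ n, Continuous (F n)) ∧
    ∀ A, Filter.Tendsto (fun n => F n A) Filter.atTop (nhds (f A))

/-- The Bourgain derivation sequence `P^ν_{f,p,ε}`. -/
noncomputable def derivSeq (f : Cantor → ℝ) (p ε : ℚ) (ν : Ordinal.{0}) : Set Cantor :=
  Ordinal.limitRecOn ν Set.univ
    (fun _ P => P \ ⋃₀ {U : Set Cantor | IsOpen U ∧
        (f '' (P ∩ U) ⊆ Set.Iio ((p : ℝ) + (ε : ℝ)) ∨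
         f '' (P ∩ U) ⊆ Set.Ioi ((p : ℝ) - (ε : ℝ)))})
    (fun o _ ih => ⋂ (μ : {μ : Ordinal.{0} // μ < o}), ih μ.1 μ.2)

/-- `α(f,p,ε)`: the least ordinal `ν` with `P^ν_{f,p,ε} = ∅`. -/
noncomputable def bAlpha (f : Cantor → ℝ) (p ε : ℚ) : Ordinal.{0} :=
  sInf {ν | derivSeq f p ε ν = ∅}

/-- The Bourgain rank `|f|_α`. -/
noncomputable def bourgainRank (f : Cantor → ℝ) : Ordinal.{0} :=
  ⨆ x : ℚ × {ε : ℚ // 0 < ε}, bAlpha f x.1 x.2.1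

open Set Filter Topology PiNat

def CorrectAnswerOn (f : Cantor → ℝ) (p ε : ℚ) (S : Set Cantor) (b : Bool) : Prop :=
  ∀ A ∈ S, CorrectAnswer f A p ε b

lemma CorrectAnswer.eq_of_not_correctAnswer_not {g : Cantor → ℝ} {B : Cantor} {q δ : ℚ}
    {b b' : Bool} (hb : CorrectAnswer g B q δ b) (hb' : ¬ CorrectAnswer g B q δ (!b')) :
    b = b' := by
  cases b <;> cases b' <;> simp_all

section DerivSeq

variable {f : Cantor → ℝ} {p ε : ℚ}

lemma derivSeq_zero : derivSeq f p ε 0 = univ :=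
  Ordinal.limitRecOn_zero _ _ _

lemma derivSeq_limit {ν : Ordinal.{0}} (hν : Order.IsSuccLimit ν) :
    derivSeq f p ε ν = ⋂ μ : {μ // μ < ν}, derivSeq f p ε μ :=
  Ordinal.limitRecOn_limit _ _ _ _ hν

lemma derivSeq_add_one (ν : Ordinal.{0}) :
    derivSeq f p ε (ν + 1) = derivSeq f p ε ν \
      ⋃₀ {U | IsOpen U ∧ ∃ b, CorrectAnswerOn f p ε (derivSeq f p ε ν ∩ U) b} := by
  rw [derivSeq, Ordinal.limitRecOn_add_one, ← derivSeq]
  congr! 4 with U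
  simp only [image_subset_iff, Bool.exists_bool, CorrectAnswerOn, CorrectAnswer]
  simp [subset_def, or_comm]

lemma mem_derivSeq_add_one {A : Cantor} {ν : Ordinal.{0}} :
    A ∈ derivSeq f p ε (ν + 1) ↔ A ∈ derivSeq f p ε ν ∧
      ∀ U, IsOpen U → A ∈ U → ∀ b, ¬ CorrectAnswerOn f p ε (derivSeq f p ε ν ∩ U) b := by
  simp only [derivSeq_add_one, Set.mem_sdiff, mem_sUnion, mem_ofPred_eq, not_exists, not_and]
  exact and_congr_right fun _ => ⟨fun h U hU hA b hb => h U ⟨hU, b, hb⟩ hA,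
    fun h U hU hA => let ⟨b, hb⟩ := hU.2; h U hU.1 hA b hb⟩

lemma isClosed_derivSeq (ν : Ordinal.{0}) : IsClosed (derivSeq f p ε ν) := by
  induction ν using Ordinal.limitRecOn with
  | zero => simp [derivSeq_zero]
  | add_one ν ih =>
    rw [derivSeq_add_one]
    exact ih.sdiff (isOpen_sUnion fun U hU => hU.1)
  | limit ν hν ih =>
    rw [derivSeq_limit hν]
    exact isClosed_iInter fun μ => ih μ μ.2

lemma derivSeq_antitone : Antitone (derivSeq f p ε) := by
  intro μ ν hμν
  induction ν using Ordinal.limitRecOn with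
  | zero => rw [nonpos_iff_eq_zero.1 hμν]
  | add_one ν ih =>
    rcases hμν.lt_or_eq with hlt | rfl
    · rw [derivSeq_add_one]
      exact sdiff_subset.trans (ih (Order.lt_add_one_iff.1 hlt))
    · rfl
  | limit ν hν ih =>
    rcases hμν.lt_or_eq with hlt | rfl
    · rw [derivSeq_limit hν]
      exact iInter_subset_of_subset ⟨μ, hlt⟩ subset_rfl
    · rfl

lemma mem_derivSeq_of_forall_lt {A : Cantor} {ν : Ordinal.{0}}
    (h : ∀ μ < ν, A ∈ derivSeq f p ε (μ + 1)) : A ∈ derivSeq f p ε ν := by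
  rcases Ordinal.zero_or_succ_or_isSuccLimit ν with rfl | ⟨μ, rfl⟩ | hν
  · simp [derivSeq_zero]
  · rw [Order.succ_eq_add_one] at h ⊢
    exact h μ (Order.lt_add_one_iff.2 le_rfl)
  · rw [derivSeq_limit hν]
    exact mem_iInter.2 fun μ => derivSeq_antitone (Order.le_succ _) (h μ μ.2)

lemma derivSeq_nonempty_of_isSuccLimit {ν : Ordinal.{0}} (hν : Order.IsSuccLimit ν)
    (h : ∀ μ < ν, (derivSeq f p ε μ).Nonempty) : (derivSeq f p ε ν).Nonempty := by
  have : Nonempty {μ // μ < ν} := ⟨⟨0, hν.bot_lt⟩⟩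
  rw [derivSeq_limit hν]
  exact IsCompact.nonempty_iInter_of_directed_nonempty_isCompact_isClosed _
    (derivSeq_antitone.comp_monotone (Subtype.mono_coe _)).directed_ge (fun μ => h μ μ.2)
    (fun μ => (isClosed_derivSeq μ).isCompact) (fun μ => isClosed_derivSeq μ)

end DerivSeq

lemma exists_isOpen_forall_lt_or_forall_gt {X : Type*} [TopologicalSpace X] [BaireSpace X]
    [Nonempty X] {F : ℕ → X → ℝ} {φ : X → ℝ} (hF : ∀ n, Continuous (F n))
    (hφ : ∀ x, Tendsto (F · x) atTop (𝓝 (φ x))) {a b : ℝ} (hab : a < b) :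
    ∃ U : Set X, IsOpen U ∧ U.Nonempty ∧ ((∀ x ∈ U, φ x < b) ∨ ∀ x ∈ U, a < φ x) := by
  obtain ⟨α, haα, hαb⟩ := exists_between hab
  obtain ⟨β, hαβ, hβb⟩ := exists_between hαb
  let S : ℕ ⊕ ℕ → Set X :=
    Sum.elim (fun n => ⋂ m ≥ n, {x | F m x ≤ β}) (fun n => ⋂ m ≥ n, {x | α ≤ F m x})
  have hS : ∀ i, IsClosed (S i) := by
    rintro (n | n)
    · exact isClosed_biInter fun m _ => isClosed_le (hF m) continuous_const
    · exact isClosed_biInter fun m _ => isClosed_le continuous_const (hF m)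
  have hcover : ⋃ i, S i = univ := by
    refine eq_univ_of_forall fun x => mem_iUnion.2 ?_
    rcases lt_or_ge (φ x) β with h | h
    · obtain ⟨n, hn⟩ := eventually_atTop.1 ((hφ x).eventually (eventually_le_nhds h))
      exact ⟨.inl n, mem_iInter₂.2 hn⟩
    · obtain ⟨n, hn⟩ :=
        eventually_atTop.1 ((hφ x).eventually (eventually_ge_nhds (hαβ.trans_le h)))
      exact ⟨.inr n, mem_iInter₂.2 hn⟩
  obtain ⟨i, hi⟩ := nonempty_interior_of_iUnion_of_closed hS hcover
  refine ⟨interior (S i), isOpen_interior, hi, ?_⟩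
  rcases i with n | n
  · refine .inl fun x hx => (le_of_tendsto (hφ x) ?_).trans_lt hβb
    have hx : x ∈ ⋂ m ≥ n, {x | F m x ≤ β} := interior_subset hx
    exact eventually_atTop.2 ⟨n, fun m hm => mem_iInter₂.1 hx m hm⟩
  · refine .inr fun x hx => haα.trans_le (ge_of_tendsto (hφ x) ?_)
    have hx : x ∈ ⋂ m ≥ n, {x | α ≤ F m x} := interior_subset hx
    exact eventually_atTop.2 ⟨n, fun m hm => mem_iInter₂.1 hx m hm⟩

section BaireOne

variable {f : Cantor → ℝ} {p ε : ℚ}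

lemma BaireOne.exists_isOpen_correctAnswerOn (hf : BaireOne f) (hε : 0 < ε) {P : Set Cantor}
    (hP : IsClosed P) (hne : P.Nonempty) :
    ∃ U, IsOpen U ∧ (P ∩ U).Nonempty ∧ ∃ b, CorrectAnswerOn f p ε (P ∩ U) b := by
  obtain ⟨F, hFc, hFf⟩ := hf
  have : CompactSpace P := isCompact_iff_compactSpace.1 hP.isCompact
  have : Nonempty P := hne.to_subtype
  have hlt : (p - ε : ℝ) < p + ε := by
    have : (0 : ℝ) < ε := by exact_mod_cast hε
    linarith
  obtain ⟨V, hV, ⟨A, hA⟩, hside⟩ := exists_isOpen_forall_lt_or_forall_gt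
    (fun n => (hFc n).comp continuous_subtype_val) (fun A : P => hFf A) hlt
  obtain ⟨U, hU, rfl⟩ := isOpen_induced_iff.1 hV
  refine ⟨U, hU, ⟨A, A.2, hA⟩, ?_⟩
  rcases hside with h | h
  · exact ⟨true, fun B hB => .inl ⟨rfl, h ⟨B, hB.1⟩ hB.2⟩⟩
  · exact ⟨false, fun B hB => .inr ⟨rfl, h ⟨B, hB.1⟩ hB.2⟩⟩

lemma BaireOne.derivSeq_add_one_ssubset (hf : BaireOne f) (hε : 0 < ε) {ν : Ordinal.{0}}
    (hne : (derivSeq f p ε ν).Nonempty) : derivSeq f p ε (ν + 1) ⊂ derivSeq f p ε ν := by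
  obtain ⟨U, hU, ⟨A, hA, hAU⟩, b, hb⟩ :=
    hf.exists_isOpen_correctAnswerOn hε (isClosed_derivSeq ν) hne
  refine (ssubset_iff_of_subset (derivSeq_antitone (Order.le_succ ν))).2 ⟨A, hA, fun h => ?_⟩
  exact (mem_derivSeq_add_one.1 h).2 U hU hAU b hb

lemma BaireOne.exists_derivSeq_eq_empty (hf : BaireOne f) (hε : 0 < ε) :
    ∃ ν, derivSeq f p ε ν = ∅ := by
  by_contra! hne
  have : StrictAnti (derivSeq f p ε) := fun ν μ hνμ =>
    (derivSeq_antitone (Order.add_one_le_of_lt hνμ)).trans_ssubset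
      (hf.derivSeq_add_one_ssubset hε (hne ν))
  exact not_injective_of_ordinal _ this.injective

end BaireOne

section Rank

variable {f : Cantor → ℝ} {p ε : ℚ}

lemma derivSeq_nonempty_of_lt_bAlpha {ν : Ordinal.{0}} (h : ν < bAlpha f p ε) :
    (derivSeq f p ε ν).Nonempty :=
  nonempty_iff_ne_empty.2 (notMem_of_lt_csInf' (s := {ν | derivSeq f p ε ν = ∅}) h)

lemma bAlpha_le_bourgainRank (hε : 0 < ε) : bAlpha f p ε ≤ bourgainRank f :=
  Ordinal.le_iSup (fun x : ℚ × {ε : ℚ // 0 < ε} => bAlpha f x.1 x.2.1) (p, ⟨ε, hε⟩)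

lemma exists_lt_bAlpha_of_lt_bourgainRank {a : Ordinal.{0}} (h : a < bourgainRank f) :
    ∃ q δ : ℚ, 0 < δ ∧ a < bAlpha f q δ := by
  obtain ⟨⟨q, δ, hδ⟩, h⟩ := Ordinal.lt_iSup_iff.1 h
  exact ⟨q, δ, hδ, h⟩

noncomputable def setRank (f : Cantor → ℝ) (p ε : ℚ) (c : Set Cantor) : Ordinal.{0} :=
  sInf {ν | c ∩ derivSeq f p ε (ν + 1) = ∅}

lemma setRank_le {c : Set Cantor} {ν : Ordinal.{0}} (h : c ∩ derivSeq f p ε (ν + 1) = ∅) :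
    setRank f p ε c ≤ ν :=
  csInf_le' h

lemma inter_derivSeq_setRank_add_one (hex : ∃ ν, derivSeq f p ε ν = ∅) (c : Set Cantor) :
    c ∩ derivSeq f p ε (setRank f p ε c + 1) = ∅ := by
  obtain ⟨ν, hν⟩ := hex
  refine csInf_mem (s := {ν | c ∩ derivSeq f p ε (ν + 1) = ∅}) ⟨ν, ?_⟩
  exact subset_empty_iff.1 fun A hA => hν ▸ derivSeq_antitone (Order.le_succ ν) hA.2

lemma setRank_mono (hex : ∃ ν, derivSeq f p ε ν = ∅) {c c' : Set Cantor} (h : c' ⊆ c) :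
    setRank f p ε c' ≤ setRank f p ε c :=
  setRank_le <| subset_empty_iff.1 <|
    (inter_subset_inter_left _ h).trans (inter_derivSeq_setRank_add_one hex c).subset

lemma setRank_eq (hex : ∃ ν, derivSeq f p ε ν = ∅) {c : Set Cantor} {A : Cantor}
    {ρ : Ordinal.{0}} (hA : A ∈ c) (hAρ : A ∈ derivSeq f p ε ρ)
    (hc : c ∩ derivSeq f p ε (ρ + 1) = ∅) : setRank f p ε c = ρ := by
  refine (setRank_le hc).antisymm (not_lt.1 fun hlt => ?_)
  exact eq_empty_iff_forall_notMem.1 (inter_derivSeq_setRank_add_one hex c) A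
    ⟨hA, derivSeq_antitone (Order.add_one_le_of_lt hlt) hAρ⟩

lemma setRank_univ_lt_bAlpha (hex : ∃ ν, derivSeq f p ε ν = ∅) :
    setRank f p ε univ < bAlpha f p ε := by
  have hα : derivSeq f p ε (bAlpha f p ε) = ∅ := csInf_mem hex
  rcases Ordinal.zero_or_succ_or_isSuccLimit (bAlpha f p ε) with h0 | ⟨ν, hν⟩ | hlim
  · simp [h0, derivSeq_zero] at hα
  · rw [← hν, Order.succ_eq_add_one] at hα ⊢
    exact (setRank_le (by rwa [univ_inter])).trans_lt (Order.lt_add_one_iff.2 le_rfl)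
  · exact absurd hα (derivSeq_nonempty_of_isSuccLimit hlim
      fun μ hμ => derivSeq_nonempty_of_lt_bAlpha hμ).ne_empty

lemma exists_mem_derivSeq_notMem_add_one (hex : ∃ ν, derivSeq f p ε ν = ∅) (A : Cantor) :
    ∃ ρ, A ∈ derivSeq f p ε ρ ∧ A ∉ derivSeq f p ε (ρ + 1) := by
  obtain ⟨ν, hν⟩ := hex
  have hne : {ρ | A ∉ derivSeq f p ε (ρ + 1)}.Nonempty :=
    ⟨ν, fun h => by simpa [hν] using derivSeq_antitone (Order.le_succ ν) h⟩
  exact ⟨sInf _, mem_derivSeq_of_forall_lt fun μ hμ => not_not.1 (notMem_of_lt_csInf' hμ),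
    csInf_mem hne⟩

def RankSided (f : Cantor → ℝ) (p ε : ℚ) (c : Set Cantor) (b : Bool) : Prop :=
  CorrectAnswerOn f p ε (c ∩ derivSeq f p ε (setRank f p ε c)) b

lemma RankSided.mono {c c' : Set Cantor} {b : Bool} (h : RankSided f p ε c b) (hc : c' ⊆ c)
    (hr : setRank f p ε c' = setRank f p ε c) : RankSided f p ε c' b :=
  fun A hA => h A ⟨hc hA.1, hr ▸ hA.2⟩

lemma exists_cylinder_subset {U : Set Cantor} {A : Cantor} (hU : IsOpen U) (hA : A ∈ U) :
    ∃ n, cylinder A n ⊆ U := by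
  obtain ⟨_, ⟨B, n, rfl⟩, hAB, hBU⟩ :=
    (isTopologicalBasis_cylinders fun _ => Bool).exists_subset_of_mem_open hA hU
  exact ⟨n, mem_cylinder_iff_eq.1 hAB ▸ hBU⟩

lemma eventually_setRank_cylinder (hex : ∃ ν, derivSeq f p ε ν = ∅) (A : Cantor) :
    ∃ ρ b, A ∈ derivSeq f p ε ρ ∧
      ∀ᶠ n in atTop, setRank f p ε (cylinder A n) = ρ ∧ RankSided f p ε (cylinder A n) b := by
  obtain ⟨ρ, hAρ, hAρ'⟩ := exists_mem_derivSeq_notMem_add_one hex A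
  obtain ⟨U, hU, hAU, b, hb⟩ : ∃ U, IsOpen U ∧ A ∈ U ∧
      ∃ b, CorrectAnswerOn f p ε (derivSeq f p ε ρ ∩ U) b := by
    by_contra! h
    exact hAρ' (mem_derivSeq_add_one.2 ⟨hAρ, h⟩)
  obtain ⟨N, hN⟩ :=
    exists_cylinder_subset (hU.inter (isClosed_derivSeq (ρ + 1)).isOpen_compl) ⟨hAU, hAρ'⟩
  refine ⟨ρ, b, hAρ, eventually_atTop.2 ⟨N, fun n hn => ?_⟩⟩
  have hsub := (cylinder_anti A hn).trans hN
  have hrank : setRank f p ε (cylinder A n) = ρ :=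
    setRank_eq hex (self_mem_cylinder A n) hAρ
      (subset_empty_iff.1 fun B hB => (hsub hB.1).2 hB.2)
  exact ⟨hrank, fun B hB => hb B ⟨hrank ▸ hB.2, (hsub hB.1).1⟩⟩

end Rank

lemma exists_not_correctAnswer_not_of_mem_derivSeq_add_one {g : Cantor → ℝ} {q δ : ℚ}
    {μ : Ordinal.{0}} {B : Cantor} (hB : B ∈ derivSeq g q δ (μ + 1)) {N : Set Cantor}
    (hN : IsOpen N) (hBN : B ∈ N) (b : Bool) :
    ∃ B' ∈ derivSeq g q δ μ ∩ N, ¬ CorrectAnswer g B' q δ (!b) := by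
  by_contra! h
  exact (mem_derivSeq_add_one.1 hB).2 N hN hBN (!b) h

structure ReductionState where
  point : Cantor
  level : Ordinal.{0}
  side : Option Bool

namespace ReductionState

variable (f g : Cantor → ℝ) (p ε q δ : ℚ)

-- Without a recorded side the level stays strictly above the cylinder rank: this leaves room
-- for the next jump.
def Invariant (c : Set Cantor) (s : ReductionState) : Prop :=
  s.point ∈ derivSeq g q δ s.level ∧
  (s.side = none → setRank f p ε c + 1 ≤ s.level) ∧
  ∀ b, s.side = some b → setRank f p ε c ≤ s.level ∧ RankSided f p ε c b ∧
    ¬ CorrectAnswer g s.point q δ (!b)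

open Classical in
noncomputable def step (n : ℕ) (c : Set Cantor) (s : ReductionState) : ReductionState :=
  if ∃ b, s.side = some b ∧ RankSided f p ε c b ∧ setRank f p ε c ≤ s.level then s
  else if ∃ b, RankSided f p ε c b then
    let b := Classical.epsilon (RankSided f p ε c)
    ⟨Classical.epsilon fun B => B ∈ derivSeq g q δ (setRank f p ε c) ∩ cylinder s.point n ∧
      ¬ CorrectAnswer g B q δ (!b), setRank f p ε c, some b⟩
  else { s with side := none }

variable {f g p ε q δ} {c c' : Set Cantor} {s : ReductionState}

lemma setRank_add_one_le_level (hex : ∃ ν, derivSeq f p ε ν = ∅) (hc : c' ⊆ c)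
    (hs : s.Invariant f g p ε q δ c)
    (hkeep : ¬ ∃ b, s.side = some b ∧ RankSided f p ε c' b ∧ setRank f p ε c' ≤ s.level) :
    setRank f p ε c' + 1 ≤ s.level := by
  have hmono := setRank_mono hex hc
  rcases hside : s.side with _ | b
  · exact (by gcongr : setRank f p ε c' + 1 ≤ setRank f p ε c + 1).trans (hs.2.1 hside)
  · obtain ⟨hle, hb, -⟩ := hs.2.2 b hside
    have hlt : setRank f p ε c' < setRank f p ε c :=
      hmono.lt_of_ne fun heq => hkeep ⟨b, hside, hb.mono hc heq, heq ▸ hle⟩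
    exact (Order.add_one_le_of_lt hlt).trans hle

lemma invariant_step (hex : ∃ ν, derivSeq f p ε ν = ∅) (hc : c' ⊆ c)
    (hs : s.Invariant f g p ε q δ c) (n : ℕ) :
    (s.step f g p ε q δ n c').Invariant f g p ε q δ c' ∧
      (s.step f g p ε q δ n c').point ∈ cylinder s.point n := by
  unfold step
  split_ifs with hkeep hsided
  · obtain ⟨b, hside, hb, hle⟩ := hkeep
    refine ⟨⟨hs.1, fun h => by simp [hside] at h, fun b' hb' => ?_⟩, self_mem_cylinder _ _⟩
    obtain rfl : b = b' := Option.some.inj (hside.symm.trans hb')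
    exact ⟨hle, hb, (hs.2.2 b hside).2.2⟩
  · have hB := setRank_add_one_le_level hex hc hs hkeep
    obtain ⟨⟨hmem, hcyl⟩, hforced⟩ := Classical.epsilon_spec <|
      exists_not_correctAnswer_not_of_mem_derivSeq_add_one (derivSeq_antitone hB hs.1)
        (isOpen_cylinder _ s.point n) (self_mem_cylinder s.point n)
        (Classical.epsilon (RankSided f p ε c'))
    refine ⟨⟨hmem, fun h => by simp at h, fun b' hb' => ?_⟩, hcyl⟩
    cases hb'
    exact ⟨le_rfl, Classical.epsilon_spec hsided, hforced⟩
  · have hB := setRank_add_one_le_level hex hc hs hkeep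
    exact ⟨⟨hs.1, fun _ => hB, fun b hb => nomatch hb⟩, self_mem_cylinder _ _⟩

lemma exists_step_side_eq_some {n : ℕ} (h : ∃ b, RankSided f p ε c b) :
    ∃ b, (s.step f g p ε q δ n c).side = some b := by
  unfold step
  split_ifs with hkeep
  · obtain ⟨b, hside, -⟩ := hkeep
    exact ⟨b, hside⟩
  · exact ⟨_, rfl⟩

lemma step_eq_self {n : ℕ} {b : Bool} (hside : s.side = some b) (hb : RankSided f p ε c b)
    (hle : setRank f p ε c ≤ s.level) : s.step f g p ε q δ n c = s := by
  rw [step, if_pos ⟨b, hside, hb, hle⟩]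

end ReductionState

section Reduction

variable (f g : Cantor → ℝ) (p ε q δ : ℚ)

noncomputable def reductionState : ℕ → Cantor → ReductionState
  | 0, _ => ⟨Classical.epsilon (· ∈ derivSeq g q δ (bAlpha f p ε)), bAlpha f p ε, none⟩
  | n + 1, A => (reductionState n A).step f g p ε q δ n (cylinder A (n + 1))

noncomputable def reduction (A : Cantor) : Cantor :=
  fun i => (reductionState f g p ε q δ (i + 1) A).point i

variable {f g p ε q δ}

lemma reductionState_congr {A A' : Cantor} {n : ℕ} (h : A' ∈ cylinder A n) :
    reductionState f g p ε q δ n A' = reductionState f g p ε q δ n A := by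
  induction n with
  | zero => rfl
  | succ n ih =>
    simp only [reductionState]
    rw [mem_cylinder_iff_eq.1 h, ih (cylinder_anti A n.le_succ h)]

variable (f g p ε q δ) in
lemma continuous_reduction : Continuous (reduction f g p ε q δ) := by
  refine continuous_pi fun i => IsLocallyConstant.continuous ?_
  refine (IsLocallyConstant.iff_exists_open _).2 fun A => ⟨cylinder A (i + 1),
    isOpen_cylinder _ A (i + 1), self_mem_cylinder A (i + 1), fun A' hA' => ?_⟩
  simp only [reduction, reductionState_congr hA']

lemma invariant_reductionState (hex : ∃ ν, derivSeq f p ε ν = ∅)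
    (hinit : (derivSeq g q δ (bAlpha f p ε)).Nonempty) (A : Cantor) : ∀ n,
    (reductionState f g p ε q δ n A).Invariant f g p ε q δ (cylinder A n)
  | 0 => ⟨Classical.epsilon_spec hinit, fun _ => by
      rw [cylinder_zero]
      exact Order.add_one_le_of_lt (setRank_univ_lt_bAlpha hex), fun _ hb => nomatch hb⟩
  | n + 1 => (ReductionState.invariant_step hex (cylinder_anti A n.le_succ)
      (invariant_reductionState hex hinit A n) n).1

lemma reductionState_point_mem_cylinder (hex : ∃ ν, derivSeq f p ε ν = ∅)
    (hinit : (derivSeq g q δ (bAlpha f p ε)).Nonempty) {A : Cantor} {m n : ℕ} (h : m ≤ n) :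
    (reductionState f g p ε q δ n A).point ∈
      cylinder (reductionState f g p ε q δ m A).point m := by
  induction n, h using Nat.le_induction with
  | base => exact self_mem_cylinder _ _
  | succ n hmn ih =>
    have := (ReductionState.invariant_step hex (cylinder_anti A n.le_succ)
      (invariant_reductionState hex hinit A n) n).2
    exact fun i hi => (this i (hi.trans_le hmn)).trans (ih i hi)

lemma reductionState_eq_of_le (hex : ∃ ν, derivSeq f p ε ν = ∅)
    (hinit : (derivSeq g q δ (bAlpha f p ε)).Nonempty) {A : Cantor} {N : ℕ} {b : Bool}
    (hside : (reductionState f g p ε q δ N A).side = some b)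
    (hrank : ∀ n ≥ N, setRank f p ε (cylinder A n) = setRank f p ε (cylinder A N))
    {n : ℕ} (hn : N ≤ n) : reductionState f g p ε q δ n A = reductionState f g p ε q δ N A := by
  induction n, hn using Nat.le_induction with
  | base => rfl
  | succ n hNn ih =>
    rw [← ih] at hside
    obtain ⟨hle, hb, -⟩ := (invariant_reductionState hex hinit A n).2.2 b hside
    have heq : setRank f p ε (cylinder A (n + 1)) = setRank f p ε (cylinder A n) :=
      (hrank _ (hNn.trans n.le_succ)).trans (hrank n hNn).symm
    rw [reductionState, ReductionState.step_eq_self hside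
      (hb.mono (cylinder_anti A n.le_succ) heq) (heq ▸ hle), ih]

lemma reduction_eq_point (hex : ∃ ν, derivSeq f p ε ν = ∅)
    (hinit : (derivSeq g q δ (bAlpha f p ε)).Nonempty) {A : Cantor} {N : ℕ}
    (hstable : ∀ n ≥ N, reductionState f g p ε q δ n A = reductionState f g p ε q δ N A) :
    reduction f g p ε q δ A = (reductionState f g p ε q δ N A).point := by
  funext i
  have h := reductionState_point_mem_cylinder hex hinit (A := A) (le_max_left (i + 1) N)
  rw [hstable _ (le_max_right _ _)] at h
  exact (h i i.lt_succ_self).symm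

lemma exists_correctAnswer_reduction (hex : ∃ ν, derivSeq f p ε ν = ∅)
    (hinit : (derivSeq g q δ (bAlpha f p ε)).Nonempty) (A : Cantor) :
    ∃ b, CorrectAnswer f A p ε b ∧ ¬ CorrectAnswer g (reduction f g p ε q δ A) q δ (!b) := by
  obtain ⟨ρ, b₀, hAρ, hev⟩ := eventually_setRank_cylinder hex A
  obtain ⟨N, hN⟩ := eventually_atTop.1 hev
  obtain ⟨b, hside⟩ := ReductionState.exists_step_side_eq_some (g := g) (q := q) (δ := δ)
    (s := reductionState f g p ε q δ N A) (n := N) ⟨b₀, (hN (N + 1) N.le_succ).2⟩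
  change (reductionState f g p ε q δ (N + 1) A).side = some b at hside
  have hrank (n : ℕ) (hn : n ≥ N + 1) :
      setRank f p ε (cylinder A n) = setRank f p ε (cylinder A (N + 1)) :=
    (hN n (by omega)).1.trans (hN (N + 1) N.le_succ).1.symm
  rw [reduction_eq_point hex hinit fun n hn => reductionState_eq_of_le hex hinit hside hrank hn]
  obtain ⟨-, hb, hforced⟩ := (invariant_reductionState hex hinit A (N + 1)).2.2 b hside
  exact ⟨b, hb A ⟨self_mem_cylinder A _, (hN (N + 1) N.le_succ).1 ▸ hAρ⟩, hforced⟩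

end Reduction

theorem bourgainRank_lt_imp_mReducible_general (f g : Cantor → ℝ) (hf : BaireOne f)
    (h : bourgainRank f < bourgainRank g) : MReducible f g := by
  intro p ε hε
  obtain ⟨q, δ, hδ, hlt⟩ :=
    exists_lt_bAlpha_of_lt_bourgainRank ((bAlpha_le_bourgainRank hε).trans_lt h)
  have hex : ∃ ν, derivSeq f p ε ν = ∅ := hf.exists_derivSeq_eq_empty hε
  refine ⟨q, δ, hδ, reduction f g p ε q δ, continuous_reduction f g p ε q δ, fun A b hb => ?_⟩
  obtain ⟨b', hfb', hgb'⟩ :=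
    exists_correctAnswer_reduction hex (derivSeq_nonempty_of_lt_bAlpha hlt) A
  rwa [hb.eq_of_not_correctAnswer_not hgb']

/-- If `f, g` are Baire 1 functions on Cantor space and `|f|_α < |g|_α`, then `f ≤_m g`. -/
theorem bourgainRank_lt_imp_mReducible (f g : Cantor → ℝ) (hf : BaireOne f) (hg : BaireOne g)
    (h : bourgainRank f < bourgainRank g) : MReducible f g :=
  bourgainRank_lt_imp_mReducible_general f g hf h
end

section
/- The relation ≤_tt1 is transitive: for all f₁, f₂, f₃ : 2^ω → ℝ, if f₁ ≤_tt1 f₂ and f₂ ≤_tt1 f₃, then f₁ ≤_tt1 f₃. -/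
/-- Topological `tt1`-reducibility: one oracle question about `g`, together with the
first `r` bits of the input, determine the answer via a truth table. -/
def TT1Reducible (f g : Cantor → ℝ) : Prop :=
  ∀ p ε : ℚ, 0 < ε → ∃ (k : Cantor → Cantor) (q δ : ℚ) (r : ℕ)
    (h : (Fin r → Bool) → Bool → Bool),
    Continuous k ∧ 0 < δ ∧
    ∀ (A : Cantor) (b : Bool), CorrectAnswer g (k A) q δ b →
      CorrectAnswer f A p ε (h (fun i : Fin r => A i) b)

namespace PiNat

attribute [local instance] PiNat.metricSpace

theorem exists_cylinder_subset_fiber_of_continuous {E : ℕ → Type*} [∀ n, TopologicalSpace (E n)]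
    [∀ n, DiscreteTopology (E n)] [CompactSpace (∀ n, E n)] {X : Type*} [TopologicalSpace X]
    [DiscreteTopology X] {F : (∀ n, E n) → X} (hF : Continuous F) :
    ∃ N : ℕ, ∀ x, ∀ y ∈ cylinder x N, F y = F x := by
  obtain ⟨δ, hδ, hball⟩ := lebesgue_number_lemma_of_metric isCompact_univ
    (fun a : X => (isOpen_discrete {a}).preimage hF) (fun x _ => Set.mem_iUnion.2 ⟨F x, rfl⟩)
  obtain ⟨N, hN⟩ := exists_pow_lt_of_lt_one hδ (by norm_num : (1 / 2 : ℝ) < 1)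
  refine ⟨N, fun x y hy => ?_⟩
  obtain ⟨a, hxa⟩ := hball x (Set.mem_univ x)
  have hyx : dist y x < δ := (mem_cylinder_iff_dist_le.1 hy).trans_lt hN
  have hFy : F y = a := hxa hyx
  have hFx : F x = a := hxa (Metric.mem_ball_self hδ)
  rw [hFy, hFx]

end PiNat

def Cantor.extend {R : ℕ} (v : Fin R → Bool) : Cantor :=
  fun n => if hn : n < R then v ⟨n, hn⟩ else false

theorem Cantor.exists_eq_comp_restrict_of_continuous {X : Type*} [TopologicalSpace X]
    [DiscreteTopology X] {F : Cantor → X} (hF : Continuous F) :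
    ∃ (R : ℕ) (φ : (Fin R → Bool) → X), ∀ A : Cantor, F A = φ (fun i : Fin R => A i) := by
  obtain ⟨R, hR⟩ := PiNat.exists_cylinder_subset_fiber_of_continuous hF
  refine ⟨R, fun v => F (Cantor.extend v), fun A => (hR A _ ?_).symm⟩
  exact PiNat.mem_cylinder_iff.2 fun i hi => by simp [Cantor.extend, hi]

/-- The relation `≤_tt1` is transitive. -/
theorem tt1Reducible_trans (f₁ f₂ f₃ : Cantor → ℝ) (h₁₂ : TT1Reducible f₁ f₂)
    (h₂₃ : TT1Reducible f₂ f₃) : TT1Reducible f₁ f₃ := by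
  intro p ε hε
  obtain ⟨k, q, δ, r, h, hk, hδ, hkh⟩ := h₁₂ p ε hε
  obtain ⟨k', q', δ', r', h', hk', hδ', hkh'⟩ := h₂₃ q δ hδ
  obtain ⟨R, φ, hφ⟩ := Cantor.exists_eq_comp_restrict_of_continuous
    (F := fun A => ((fun i : Fin r => A i), fun i : Fin r' => k A i)) (by fun_prop)
  refine ⟨k' ∘ k, q', δ', R, fun v b => h (φ v).1 (h' (φ v).2 b), hk'.comp hk, hδ',
    fun A b hb => ?_⟩
  beta_reduce
  rw [← hφ A]
  exact hkh A _ (hkh' (k A) b hb)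
end

section
/- If f : 2^ω → ℝ is continuous and g : 2^ω → ℝ is non-constant, then f ≤_m g. -/
lemma clopen_sep {K U : Set Cantor} (hK : IsClosed K) (hU : IsOpen U) (hKU : K ⊆ U) :
    ∃ C : Set Cantor, IsClopen C ∧ K ⊆ C ∧ C ⊆ U := by
  have hKc : IsCompact K := hK.isCompact
  have h : ∀ x ∈ K, ∃ V : Set Cantor, IsClopen V ∧ x ∈ V ∧ V ⊆ U := fun x hx =>
    compact_exists_isClopen_in_isOpen hU (hKU hx)
  choose V hV hxV hVU using h
  obtain ⟨t, ht⟩ := hKc.elim_nhds_subcover' (fun x hx => V x hx)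
    (fun x hx => (hV x hx).2.mem_nhds (hxV x hx))
  refine ⟨⋃ x ∈ t, V x x.2, ?_, ht, ?_⟩
  · exact isClopen_biUnion_finset fun x _ => hV x x.2
  · exact Set.iUnion₂_subset fun x _ => hVU x x.2

/-- If `f` is continuous and `g` is non-constant, then `f ≤_m g`. -/
theorem continuous_mReducible_nonconstant (f g : Cantor → ℝ) (hf : Continuous f)
    (hg : ∃ A B : Cantor, g A ≠ g B) : MReducible f g := by
  obtain ⟨A₀, B₀, hAB⟩ := hg
  -- WLOG g A₀ < g B₀
  wlog hlt : g A₀ < g B₀ with H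
  · exact H f g hf B₀ A₀ hAB.symm
      (lt_of_le_of_ne (not_lt.mp hlt) hAB.symm)
  classical
  intro p ε hε
  obtain ⟨q₁, hq₁, hq₁'⟩ := exists_rat_btwn hlt
  obtain ⟨q₂, hq₂, hq₂'⟩ := exists_rat_btwn hq₁'
  have hq12 : q₁ < q₂ := by exact_mod_cast hq₂
  refine ⟨(q₁ + q₂) / 2, (q₂ - q₁) / 2, by linarith, ?_⟩
  -- clopen separation
  have hK : IsClosed {A : Cantor | f A ≤ (p : ℝ) - ε} := isClosed_le hf continuous_const
  have hU : IsOpen {A : Cantor | f A < (p : ℝ) + ε} := isOpen_lt hf continuous_const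
  have hKU : {A : Cantor | f A ≤ (p : ℝ) - ε} ⊆ {A : Cantor | f A < (p : ℝ) + ε} := by
    intro A hA
    have : (0:ℝ) < ε := by exact_mod_cast hε
    simp only [Set.mem_setOf_eq] at *
    linarith
  obtain ⟨C, hC, hKC, hCU⟩ := clopen_sep hK hU hKU
  refine ⟨fun A => if A ∈ C then A₀ else B₀, ?_, ?_⟩
  · apply Continuous.if
    · intro a ha
      rw [Set.setOf_mem_eq, hC.frontier_eq] at ha
      exact absurd ha (Set.notMem_empty a)
    · exact continuous_const
    · exact continuous_const
  · intro A b hb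
    have hq : ((q₁ + q₂) / 2 : ℚ) - ((q₂ - q₁) / 2 : ℚ) = q₁ := by ring
    have hq' : ((q₁ + q₂) / 2 : ℚ) + ((q₂ - q₁) / 2 : ℚ) = q₂ := by ring
    by_cases hAC : A ∈ C
    · rw [show (fun A => if A ∈ C then A₀ else B₀) A = A₀ from if_pos hAC] at hb
      rcases hb with ⟨hbt, _⟩ | ⟨hbf, hgt⟩
      · exact Or.inl ⟨hbt, hCU hAC⟩
      · exfalso
        have : ((q₁ + q₂) / 2 : ℝ) - ((q₂ - q₁) / 2 : ℝ) = q₁ := by push_cast; ring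
        rw [show (((q₁ + q₂) / 2 : ℚ) : ℝ) = ((q₁ + q₂) / 2 : ℝ) by push_cast; ring,
          show (((q₂ - q₁) / 2 : ℚ) : ℝ) = ((q₂ - q₁) / 2 : ℝ) by push_cast; ring, this] at hgt
        linarith
    · rw [show (fun A => if A ∈ C then A₀ else B₀) A = B₀ from if_neg hAC] at hb
      rcases hb with ⟨hbt, hlt'⟩ | ⟨hbf, _⟩
      · exfalso
        have : ((q₁ + q₂) / 2 : ℝ) + ((q₂ - q₁) / 2 : ℝ) = q₂ := by push_cast; ring
        rw [show (((q₁ + q₂) / 2 : ℚ) : ℝ) = ((q₁ + q₂) / 2 : ℝ) by push_cast; ring,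
          show (((q₂ - q₁) / 2 : ℚ) : ℝ) = ((q₂ - q₁) / 2 : ℝ) by push_cast; ring, this] at hlt'
        linarith
      · refine Or.inr ⟨hbf, ?_⟩
        have := mt (@hKC A) hAC
        simp only [Set.mem_setOf_eq, not_le] at this
        exact this
end

section
/- Let g : 2^ω → ℝ be lower semicontinuous but not continuous, and let f : 2^ω → ℝ be Baire 1. Then f ≤_m g if and only if f is lower semicontinuous. -/
/-!
If `f ≤_m g` via `k`, every point with `f > p + ε` lies in `k⁻¹ {g > q - δ}`, which is open when
`g` is lower semicontinuous and on which `f > p - ε`; hence `f` is lower semicontinuous.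

Conversely, if `g` is not upper semicontinuous at `x₀`, there are `q, δ` and a sequence `wₙ → x₀`
with `g x₀ < q - δ < q + δ < g wₙ`. For `f` lower semicontinuous, `U = {f > p - ε}` is open, and
a continuous `k` sending `U` into `{wₙ}` and its complement to `x₀` reduces `f` to `g`. Such a `k`
sends a point of `U` to `wₙ`, where `n` is the length of its shortest cylinder inside `U`: this
length is locally constant on `U` and tends to infinity towards the complement of `U`.
-/

open Filter Topology

namespace PiNat

variable {E : ℕ → Type*}

theorem disjoint_cylinder_shortestPrefixDiff {s : Set (∀ n, E n)} {x : ∀ n, E n}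
    (hx : ∃ n, Disjoint s (cylinder x n)) : Disjoint s (cylinder x (shortestPrefixDiff x s)) := by
  classical
  rw [shortestPrefixDiff, dif_pos hx]
  exact Nat.find_spec hx

theorem shortestPrefixDiff_eq_of_mem_cylinder {s : Set (∀ n, E n)} {x y : ∀ n, E n}
    (hx : ∃ n, Disjoint s (cylinder x n)) (hy : y ∈ cylinder x (shortestPrefixDiff x s)) :
    shortestPrefixDiff y s = shortestPrefixDiff x s := by
  classical
  have hx_eq : shortestPrefixDiff x s = Nat.find hx := dif_pos hx
  have hcyl : ∀ m ≤ Nat.find hx, cylinder y m = cylinder x m := fun m hm =>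
    mem_cylinder_iff_eq.1 (cylinder_anti x hm (hx_eq ▸ hy))
  have hy' : ∃ n, Disjoint s (cylinder y n) := ⟨_, hcyl _ le_rfl ▸ Nat.find_spec hx⟩
  have hy_eq : shortestPrefixDiff y s = Nat.find hy' := dif_pos hy'
  rw [hx_eq, hy_eq]
  refine le_antisymm (Nat.find_min' _ (hcyl _ le_rfl ▸ Nat.find_spec hx)) ?_
  refine (Nat.le_find_iff _ _).2 fun m hm => ?_
  rw [hcyl m hm.le]
  exact Nat.find_min hx hm

variable [∀ n, TopologicalSpace (E n)] [∀ n, DiscreteTopology (E n)]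

theorem lt_shortestPrefixDiff_of_mem_cylinder {s : Set (∀ n, E n)} (hs : IsClosed s)
    {x y : ∀ n, E n} (hx : x ∈ s) (hy : y ∉ s) {N : ℕ} (hxy : y ∈ cylinder x N) :
    N < shortestPrefixDiff y s :=
  ((mem_cylinder_iff_le_firstDiff (ne_of_mem_of_not_mem hx hy).symm N).1 hxy).trans_lt
    (firstDiff_lt_shortestPrefixDiff hs hy hx)

theorem exists_disjoint_compl_cylinder {U : Set (∀ n, E n)} (hU : IsOpen U) {x : ∀ n, E n}
    (hx : x ∈ U) : ∃ n, Disjoint Uᶜ (cylinder x n) := by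
  obtain ⟨_, ⟨y, n, rfl⟩, hxy, hyU⟩ :=
    (isTopologicalBasis_cylinders E).exists_subset_of_mem_open hx hU
  exact ⟨n, Set.disjoint_compl_left_iff_subset.2 (mem_cylinder_iff_eq.1 hxy ▸ hyU)⟩

theorem exists_continuous_mapsTo_range_eqOn_compl {X : Type*} [TopologicalSpace X]
    {U : Set (∀ n, E n)} (hU : IsOpen U) {w : ℕ → X} {x₀ : X} (hw : Tendsto w atTop (𝓝 x₀)) :
    ∃ k : (∀ n, E n) → X, Continuous k ∧ Set.MapsTo k U (Set.range w) ∧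
      Set.EqOn k (fun _ => x₀) Uᶜ := by
  classical
  let k : (∀ n, E n) → X := fun A => if A ∈ U then w (shortestPrefixDiff A Uᶜ) else x₀
  refine ⟨k, continuous_iff_continuousAt.2 fun A => ?_, fun A hA => ⟨_, (if_pos hA).symm⟩,
    fun A hA => if_neg hA⟩
  by_cases hA : A ∈ U
  · have hAU := exists_disjoint_compl_cylinder hU hA
    have hconst : k =ᶠ[𝓝 A] fun _ => k A := by
      filter_upwards [(isOpen_cylinder E A _).mem_nhds (self_mem_cylinder A _)] with B hB
      have hBU : B ∈ U := Set.disjoint_compl_left_iff_subset.1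
        (disjoint_cylinder_shortestPrefixDiff hAU) hB
      simp only [k, if_pos hA, if_pos hBU, shortestPrefixDiff_eq_of_mem_cylinder hAU hB]
    exact continuousAt_const.congr hconst.symm
  · show Tendsto k (𝓝 A) (𝓝 (k A))
    rw [show k A = x₀ from if_neg hA]
    refine fun W hW => mem_map.2 ?_
    obtain ⟨N, hN⟩ := eventually_atTop.1 (hw hW)
    filter_upwards [(isOpen_cylinder E A N).mem_nhds (self_mem_cylinder A N)] with B hB
    by_cases hBU : B ∈ U
    · have hNB := lt_shortestPrefixDiff_of_mem_cylinder hU.isClosed_compl hA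
        (Set.notMem_compl_iff.2 hBU) hB
      simpa [k, hBU] using hN _ hNB.le
    · simpa [k, hBU] using mem_of_mem_nhds hW

end PiNat

theorem exists_rat_sub_add_mem_Ioo {a b : ℝ} (h : a < b) :
    ∃ p ε : ℚ, 0 < ε ∧ a < p - ε ∧ (p : ℝ) + ε < b := by
  obtain ⟨u, hau, hub⟩ := exists_rat_btwn h
  obtain ⟨v, huv, hvb⟩ := exists_rat_btwn hub
  refine ⟨(u + v) / 2, (v - u) / 2, by exact_mod_cast (by linarith : (0 : ℝ) < (v - u) / 2),
    ?_, ?_⟩ <;> push_cast <;> linarith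

@[simp]
theorem correctAnswer_true {f : Cantor → ℝ} {A : Cantor} {p ε : ℚ} :
    CorrectAnswer f A p ε true ↔ f A < p + ε := by
  simp [CorrectAnswer]

@[simp]
theorem correctAnswer_false {f : Cantor → ℝ} {A : Cantor} {p ε : ℚ} :
    CorrectAnswer f A p ε false ↔ p - ε < f A := by
  simp [CorrectAnswer]

theorem MReducible.lowerSemicontinuous {f g : Cantor → ℝ} (h : MReducible f g)
    (hg : LowerSemicontinuous g) : LowerSemicontinuous f := by
  intro x y hy
  obtain ⟨p, ε, hε, hyp, hpx⟩ := exists_rat_sub_add_mem_Ioo hy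
  obtain ⟨q, δ, hδ, k, hk, hred⟩ := h p ε hε
  have hδ' : (0 : ℝ) < δ := by exact_mod_cast hδ
  have hkx : (q : ℝ) - δ < g (k x) := by
    by_contra! hle
    have := correctAnswer_true.1 (hred x true (correctAnswer_true.2 (by linarith)))
    linarith
  filter_upwards [hg.comp hk x _ hkx] with z hz
  exact hyp.trans (correctAnswer_false.1 (hred z false (correctAnswer_false.2 hz)))

theorem LowerSemicontinuous.mReducible {f g : Cantor → ℝ} (hf : LowerSemicontinuous f)
    (hg : ¬ UpperSemicontinuous g) : MReducible f g := by
  intro p ε hε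
  obtain ⟨x₀, y, hfreq, hy⟩ : ∃ x₀ y, (∃ᶠ x in 𝓝 x₀, y ≤ g x) ∧ g x₀ < y := by
    simpa [upperSemicontinuous_iff_frequently] using hg
  obtain ⟨q, δ, hδ, hq, hqy⟩ := exists_rat_sub_add_mem_Ioo hy
  obtain ⟨w, hw, hwy⟩ := exists_seq_forall_of_frequently hfreq
  obtain ⟨k, hk, hkU, hkUc⟩ :=
    PiNat.exists_continuous_mapsTo_range_eqOn_compl (hf.isOpen_preimage (p - ε)) hw
  refine ⟨q, δ, hδ, k, hk, fun A b hb => ?_⟩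
  have hε' : (0 : ℝ) < ε := by exact_mod_cast hε
  by_cases hA : (p : ℝ) - ε < f A
  · obtain ⟨n, hn⟩ := hkU hA
    cases b
    · exact correctAnswer_false.2 hA
    · rw [← hn, correctAnswer_true] at hb
      linarith [hwy n]
  · rw [hkUc hA] at hb
    cases b
    · rw [correctAnswer_false] at hb
      linarith
    · exact correctAnswer_true.2 (by linarith)

theorem mReducible_lsc_iff_general (f g : Cantor → ℝ) (hg : LowerSemicontinuous g)
    (hgc : ¬ Continuous g) :
    MReducible f g ↔ LowerSemicontinuous f :=
  ⟨fun h => h.lowerSemicontinuous hg, fun hf => hf.mReducible fun hgu =>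
    hgc (continuous_iff_lower_upperSemicontinuous.2 ⟨hg, hgu⟩)⟩

/-- For `g` lower semicontinuous but not continuous and `f` Baire 1:
`f ≤_m g` iff `f` is lower semicontinuous. -/
theorem mReducible_lsc_iff (f g : Cantor → ℝ) (hg : LowerSemicontinuous g)
    (hgc : ¬ Continuous g) (hf : BaireOne f) :
    MReducible f g ↔ LowerSemicontinuous f :=
  mReducible_lsc_iff_general f g hg hgc
end

section
/- Let α and β be ordinals with β ≥ 2. Then α ≲ β if and only if for every ordinal η, β ≤ ω^η implies α ≤ ω^η (where ω^η denotes ordinal exponentiation with base ω). -/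
/-!
If `α ≲ β` and `β ≤ ω^η`, every `δ < β` lies below the additively principal ordinal `ω^η`,
so all multiples `δ·n` do, and hence `α ≤ ω^η`. Conversely, let `η` be least with `β ≤ ω^η`;
then `η ≠ 0` as `β ≥ 2`, and every `γ < ω^η` lies below some `ω^ξ·n` with `ξ < η`, where
`ω^ξ < β` by minimality. Thus `ω^η ≲ β`, and `α ≲ β` follows from `α ≤ ω^η`.
-/

/-- The coarsening `α ≲ β` of the ordinal order: for every `γ < α` there are `δ < β`
and `n ∈ ℕ` with `γ < δ·n`. -/
def OrdLesssim (a b : Ordinal) : Prop :=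
  ∀ γ < a, ∃ δ < b, ∃ n : ℕ, γ < δ * (n : Ordinal)

open Ordinal

theorem OrdLesssim.mono_left {α α' β : Ordinal} (h : OrdLesssim α' β) (hα : α ≤ α') :
    OrdLesssim α β :=
  fun γ hγ ↦ h γ (hγ.trans_le hα)

theorem OrdLesssim.le_omega0_opow {α β η : Ordinal} (h : OrdLesssim α β)
    (hβ : β ≤ ω ^ η) : α ≤ ω ^ η := by
  by_contra! hlt
  obtain ⟨δ, hδ, n, hn⟩ := h _ hlt
  exact hn.not_gt <| (isPrincipal_add_omega0_opow η).mul_natCast_lt (hδ.trans_le hβ) n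

theorem ordLesssim_omega0_opow {β η : Ordinal} (hη : η ≠ 0) (h : ∀ ξ < η, ω ^ ξ < β) :
    OrdLesssim (ω ^ η) β := fun _ hγ ↦
  let ⟨ξ, hξ, n, hn⟩ := (lt_omega0_opow hη).1 hγ
  ⟨_, h ξ hξ, n, hn⟩

theorem exists_minimal_omega0_opow_ge (β : Ordinal) :
    ∃ η : Ordinal, β ≤ ω ^ η ∧ ∀ ξ < η, ω ^ ξ < β := by
  set S := {η : Ordinal | β ≤ ω ^ η}
  have hS : S.Nonempty := ⟨β, right_le_opow β one_lt_omega0⟩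
  exact ⟨sInf S, csInf_mem hS, fun ξ hξ ↦ not_le.1 fun hξS ↦ notMem_of_lt_csInf' hξ hξS⟩

/-- For ordinals `α`, `β` with `β ≥ 2`: `α ≲ β` iff for every ordinal `η`,
`β ≤ ω^η` implies `α ≤ ω^η`. -/
theorem ordLesssim_iff_omega_pow (α β : Ordinal) (hβ : 2 ≤ β) :
    OrdLesssim α β ↔ ∀ η : Ordinal, β ≤ Ordinal.omega0 ^ η → α ≤ Ordinal.omega0 ^ η := by
  refine ⟨fun h _ ↦ h.le_omega0_opow, fun h ↦ ?_⟩
  obtain ⟨η, hβη, hmin⟩ := exists_minimal_omega0_opow_ge β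
  have hη : η ≠ 0 := by
    rintro rfl
    rw [opow_zero] at hβη
    exact absurd (hβ.trans hβη) (by norm_num)
  exact (ordLesssim_omega0_opow hη hmin).mono_left (h η hβη)
end
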